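/- arXiv:1612.08357 — 3 statements merged into one kernel-verified Lean document; each statement's English description precedes it below -/
import Mathlib

section
/- If $R$ is an abelian ring, then every idempotent of the power series ring $R[[x]]$ lies in $R$ (i.e., has all higher coefficients zero). -/
/-!
Let `e` be the constant coefficient of an idempotent `ε ∈ R⟦X⟧`. Then `e` is idempotent, hence
central, so `C e` is an idempotent commuting with `ε`. For commuting idempotents `e₁, e₂` the
difference `d = e₁ - e₂` satisfies `d ^ 3 = d`, i.e. `d * (1 - d ^ 2) = 0`; for `d = ε - C e` the
factor `1 - d ^ 2` has constant coefficient `1`, so it is a unit and `d = 0`.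
-/

theorem IsIdempotentElem.sub_pow_three_of_commute {R : Type*} [Ring R] {e₁ e₂ : R}
    (he₁ : IsIdempotentElem e₁) (he₂ : IsIdempotentElem e₂) (H : Commute e₁ e₂) :
    (e₁ - e₂) ^ 3 = e₁ - e₂ := by
  simp only [pow_succ, pow_zero, mul_sub, one_mul, sub_mul, he₁.eq, he₂.eq, H.eq, mul_assoc]
  simp only [← mul_assoc, he₂.eq]
  abel

theorem IsIdempotentElem.eq_of_isUnit_one_sub_sq_of_commute {R : Type*} [Ring R] {e₁ e₂ : R}
    (he₁ : IsIdempotentElem e₁) (he₂ : IsIdempotentElem e₂) (H : Commute e₁ e₂)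
    (hu : IsUnit (1 - (e₁ - e₂) ^ 2)) : e₁ = e₂ := by
  have h : (e₁ - e₂) * (1 - (e₁ - e₂) ^ 2) = 0 := by
    rw [mul_sub, mul_one, ← pow_succ', he₁.sub_pow_three_of_commute he₂ H, sub_self]
  rwa [hu.mul_left_eq_zero, sub_eq_zero] at h

namespace PowerSeries

variable {R : Type*} [Ring R]

theorem isUnit_one_sub_sq_of_constantCoeff_eq_zero {φ : R⟦X⟧} (hφ : constantCoeff φ = 0) :
    IsUnit (1 - φ ^ 2) := by
  simp [isUnit_iff_constantCoeff, hφ]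

theorem commute_C_of_mem_center {a : R} (ha : a ∈ Set.center R) (φ : R⟦X⟧) :
    Commute (C a) φ := by
  ext n
  rw [coeff_C_mul, coeff_mul_C]
  exact (Set.mem_center_iff.mp ha).comm _

theorem eq_C_constantCoeff_of_isIdempotentElem {ε : R⟦X⟧} (hε : IsIdempotentElem ε)
    (hc : constantCoeff ε ∈ Set.center R) : ε = C (constantCoeff ε) := by
  refine hε.eq_of_isUnit_one_sub_sq_of_commute ((hε.map constantCoeff).map C)
    (commute_C_of_mem_center hc ε).symm (isUnit_one_sub_sq_of_constantCoeff_eq_zero ?_)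
  simp

end PowerSeries

theorem stmt_15 {R : Type u} [Ring R]
    (habel : ∀ e : R, e * e = e → e ∈ Set.center R) :
    ∀ ε : PowerSeries R, ε * ε = ε → ∃ e : R, ε = PowerSeries.C e := by
  intro ε hε
  have hidem : IsIdempotentElem ε := hε
  exact ⟨_, PowerSeries.eq_C_constantCoeff_of_isIdempotentElem hidem
    (habel _ (hidem.map PowerSeries.constantCoeff))⟩
end

section
/- Let $R = A \times B$ be a direct product of rings with $win(A) = 1$. Then $win(R) = win(B)$. -/
/-- The set χ(a) of idempotents e with a - e or a + e a unit. -/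
def chi {R : Type u} [Ring R] (a : R) : Set R :=
  {e | e * e = e ∧ (IsUnit (a - e) ∨ IsUnit (a + e))}
 
/-- The weak clean index of a ring. -/
noncomputable def win (R : Type u) [Ring R] : Cardinal :=
  ⨆ a : R, Cardinal.mk (chi a)

/-!
Idempotents and units of `A × B` are computed componentwise, so `e ∈ χ(a, b)` forces
`e.1 ∈ χ(a)` and `e.2 ∈ χ(b)`. When `win A = 1` every `χ(a)` has at most one element,
so `e ↦ e.2` embeds `χ(a, b)` into `χ(b)`. Conversely `e ↦ (1, e)` embeds `χ(b)` into
`χ(0, b)`, because `0 - 1` and `0 + 1` are units of `A`.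
-/

universe u

theorem RingHom.map_mem_chi {R S : Type*} [Ring R] [Ring S] (f : R →+* S) {a e : R}
    (he : e ∈ chi a) : f e ∈ chi (f a) := by
  obtain ⟨hidem, hunit⟩ := he
  refine ⟨by rw [← map_mul, hidem], ?_⟩
  rw [← map_sub, ← map_add]
  exact hunit.imp (IsUnit.map f) (IsUnit.map f)

theorem mk_chi_le_win {R : Type u} [Ring R] (a : R) : Cardinal.mk (chi a) ≤ win R :=
  le_ciSup Cardinal.bddAbove_of_small a

theorem chi_subsingleton_of_win_le_one {R : Type u} [Ring R] (h : win R ≤ 1) (a : R) :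
    (chi a).Subsingleton :=
  Cardinal.mk_le_one_iff_set_subsingleton.1 ((mk_chi_le_win a).trans h)

section Prod

variable {A B : Type u} [Ring A] [Ring B]

theorem mk_chi_prod_le_mk_chi_snd {p : A × B} (h : (chi p.1).Subsingleton) :
    Cardinal.mk (chi p) ≤ Cardinal.mk (chi p.2) := by
  refine Cardinal.mk_le_of_injective
    (f := fun e : chi p => ⟨e.1.2, (RingHom.snd A B).map_mem_chi e.2⟩) ?_
  rintro ⟨e, he⟩ ⟨e', he'⟩ hsnd
  have hfst : e.1 = e'.1 :=
    h ((RingHom.fst A B).map_mem_chi he) ((RingHom.fst A B).map_mem_chi he')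
  exact Subtype.ext (Prod.ext hfst (congrArg Subtype.val hsnd))

theorem one_prod_mem_chi_zero_prod {b e : B} (he : e ∈ chi b) :
    ((1 : A), e) ∈ chi ((0 : A), b) := by
  obtain ⟨hidem, hunit⟩ := he
  refine ⟨Prod.ext (one_mul 1) hidem, ?_⟩
  simp only [Prod.isUnit_iff, Prod.fst_sub, Prod.snd_sub, Prod.fst_add, Prod.snd_add,
    zero_sub, zero_add, IsUnit.neg_iff, isUnit_one, true_and]
  exact hunit

theorem mk_chi_le_mk_chi_zero_prod (b : B) :
    Cardinal.mk (chi b) ≤ Cardinal.mk (chi ((0 : A), b)) :=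
  Cardinal.mk_le_of_injective
    (f := fun e : chi b => ⟨((1 : A), e.1), one_prod_mem_chi_zero_prod e.2⟩)
    fun _ _ h => Subtype.ext (congrArg (fun e : chi ((0 : A), b) => e.1.2) h)

theorem win_le_win_prod : win B ≤ win (A × B) :=
  ciSup_le fun b => (mk_chi_le_mk_chi_zero_prod b).trans (mk_chi_le_win ((0 : A), b))

theorem win_prod_le_of_win_le_one (hA : win A ≤ 1) : win (A × B) ≤ win B :=
  ciSup_le fun p =>
    (mk_chi_prod_le_mk_chi_snd (chi_subsingleton_of_win_le_one hA p.1)).trans (mk_chi_le_win p.2)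

end Prod

theorem stmt_18 {A : Type u} {B : Type u} [Ring A] [Ring B]
    (hA : win A = 1) : win (A × B) = win B :=
  le_antisymm (win_prod_le_of_win_le_one hA.le) win_le_win_prod
end

section
/- Let $e$ be a non-central idempotent of a ring $R$ such that both $eR(1-e) \ne 0$ and $(1-e)Re \ne 0$. Then $|\chi(1 - e)| \ge 3$. -/
/-!
Every `x ∈ eR(1-e)` or `x ∈ (1-e)Re` squares to zero and satisfies `ex + xe = x`, so `f = e + x`
is an idempotent with `ef + fe = e + f`. For two such idempotents `(1 - e - f)² = 1`, hence
`(1 - e) - f` is a unit and `f ∈ χ(1 - e)`. Nonzero `x ∈ eR(1-e)` and `y ∈ (1-e)Re` then give the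
three distinct elements `e`, `e + x`, `e + y` of `χ(1 - e)`.
-/

open Cardinal

theorem Cardinal.three_le_mk_of_mem {α : Type*} {s : Set α} {a b c : α}
    (ha : a ∈ s) (hb : b ∈ s) (hc : c ∈ s) (hab : a ≠ b) (hac : a ≠ c) (hbc : b ≠ c) :
    3 ≤ #s := by
  calc (3 : Cardinal) = #({a, b, c} : Set α) := by
        rw [mk_insert (by simp [hab, hac]), mk_insert (by simpa using hbc), mk_singleton]
        norm_num
    _ ≤ #s := mk_le_mk_of_subset (by simp [Set.insert_subset_iff, ha, hb, hc])

variable {R : Type*} [Ring R] {e f z : R}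

theorem IsIdempotentElem.mul_self_one_sub_sub (he : IsIdempotentElem e)
    (hf : IsIdempotentElem f) (hef : e * f + f * e = e + f) :
    (1 - e - f) * (1 - e - f) = 1 := by
  have expand : (1 - e - f) * (1 - e - f) =
      1 - 2 * e - 2 * f + e * e + f * f + (e * f + f * e) := by
    noncomm_ring
  rw [expand, he.eq, hf.eq, hef]
  noncomm_ring

theorem IsIdempotentElem.mem_chi_one_sub (he : IsIdempotentElem e)
    (hf : IsIdempotentElem f) (hef : e * f + f * e = e + f) : f ∈ chi (1 - e) := by
  have hsq := he.mul_self_one_sub_sub hf hef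
  exact ⟨hf, Or.inl (isUnit_iff_exists.2 ⟨_, hsq, hsq⟩)⟩

theorem IsIdempotentElem.add_mem_chi_one_sub (he : IsIdempotentElem e)
    (hz : e * z + z * e = z) (hzz : z * z = 0) : e + z ∈ chi (1 - e) := by
  have hidem : IsIdempotentElem (e + z) := by
    have expand : (e + z) * (e + z) = e * e + (e * z + z * e) + z * z := by noncomm_ring
    rw [IsIdempotentElem, expand, he.eq, hz, hzz, add_zero]
  refine he.mem_chi_one_sub hidem ?_
  rw [mul_add, add_mul, he.eq, add_add_add_comm, hz, add_comm e e, add_assoc]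

theorem IsIdempotentElem.mul_corner_self (he : IsIdempotentElem e) (r : R) :
    e * (e * r * (1 - e)) = e * r * (1 - e) := by
  rw [← mul_assoc, ← mul_assoc, he.eq]

theorem IsIdempotentElem.mul_corner_one_sub (he : IsIdempotentElem e) (r : R) :
    e * ((1 - e) * r * e) = 0 := by
  rw [← mul_assoc, ← mul_assoc, he.mul_one_sub_self, zero_mul, zero_mul]

theorem IsIdempotentElem.add_corner_mem_chi_one_sub (he : IsIdempotentElem e) (r : R) :
    e + e * r * (1 - e) ∈ chi (1 - e) := by
  have hright : e * r * (1 - e) * e = 0 := by rw [mul_assoc, he.one_sub_mul_self, mul_zero]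
  refine he.add_mem_chi_one_sub ?_ ?_
  · rw [he.mul_corner_self, hright, add_zero]
  · nth_rw 2 [← he.mul_corner_self]
    rw [← mul_assoc, hright, zero_mul]

theorem IsIdempotentElem.add_corner_one_sub_mem_chi_one_sub (he : IsIdempotentElem e) (r : R) :
    e + (1 - e) * r * e ∈ chi (1 - e) := by
  have hright : (1 - e) * r * e * e = (1 - e) * r * e := by rw [mul_assoc, he.eq]
  refine he.add_mem_chi_one_sub ?_ ?_
  · rw [he.mul_corner_one_sub, hright, zero_add]
  · nth_rw 1 [← hright]
    rw [mul_assoc, he.mul_corner_one_sub, mul_zero]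

theorem stmt_19_general {R : Type u} [Ring R] (e : R) (he : e * e = e)
    (hM : ∃ r : R, e * r * (1 - e) ≠ 0) (hN : ∃ r : R, (1 - e) * r * e ≠ 0) :
    3 ≤ Cardinal.mk (chi (1 - e)) := by
  replace he : IsIdempotentElem e := he
  obtain ⟨r, hx⟩ := hM
  obtain ⟨s, hy⟩ := hN
  have hxy : e * r * (1 - e) ≠ (1 - e) * s * e := fun h =>
    hx <| by rw [← he.mul_corner_self, h, he.mul_corner_one_sub]
  exact three_le_mk_of_mem (he.mem_chi_one_sub he (by rw [he.eq]))
    (he.add_corner_mem_chi_one_sub r) (he.add_corner_one_sub_mem_chi_one_sub s)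
    (by simpa using hx) (by simpa using hy) (by simpa using hxy)

theorem stmt_19 {R : Type u} [Ring R] (e : R) (he : e * e = e)
    (hnc : e ∉ Set.center R)
    (hM : ∃ r : R, e * r * (1 - e) ≠ 0) (hN : ∃ r : R, (1 - e) * r * e ≠ 0) :
    3 ≤ Cardinal.mk (chi (1 - e)) :=
  stmt_19_general e he hM hN
end
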